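/- arXiv:1101.2940 — 3 statements merged into one kernel-verified Lean document; each statement's English description precedes it below -/
import Mathlib

section
/- Let d ≥ 1 be a natural number, let U be a finite type, let f : Finset U → ℝ be a nonnegative submodular set function, let c : U → ℝ^d with c_r(i) ≥ 0, let L ∈ ℝ^d with L_r > 0, and let 0 < ε < 1/4. Assume every element of U is small, i.e., c_r(i) ≤ ε³·L_r for all i ∈ U and all r. Then every ε-nearly feasible set S ⊆ U (i.e., c_r(S) ≤ (1+ε)·L_r for all r) contains a subset S' ⊆ S that is feasible (c_r(S') ≤ L_r for all r) and satisfies f(S') ≥ (1 − 4ε)^d · f(S). -/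
/-!
Fix the budgets one dimension at a time, each time losing a factor of at most `1 - 4ε`.
In a dimension `r` where `S` overshoots by `a = c_r(S) - L_r ≤ ε L_r`, peel off
`k ≈ 1/(4ε)` disjoint chunks of `S`, each of weight between `a` and `a + ε³ L_r`; since the
elements are small, `S` is heavy enough for this. Removing any one chunk restores the budget,
and by submodularity the losses `f S - f (S \ B)` of the chunks sum to at most `f S`, so the
cheapest chunk costs at most `f S / k ≤ 4ε f S`.
-/

open Finset

def IsSubmodular {U : Type*} [DecidableEq U] (f : Finset U → ℝ) : Prop :=
  ∀ S T : Finset U, f (S ∪ T) + f (S ∩ T) ≤ f S + f T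

theorem exists_subset_sum_mem_Icc {U : Type*} (w : U → ℝ) {a δ : ℝ} (ha : 0 ≤ a) (hδ : 0 ≤ δ)
    (hw : ∀ i, w i ≤ δ) {T : Finset U} (hT : a ≤ ∑ i ∈ T, w i) :
    ∃ B ⊆ T, ∑ i ∈ B, w i ∈ Set.Icc a (a + δ) := by
  classical
  induction T using Finset.induction_on with
  | empty => exact ⟨∅, Subset.rfl, by simp only [sum_empty] at hT ⊢; constructor <;> linarith⟩
  | insert x T hx ih =>
    by_cases hT' : a ≤ ∑ i ∈ T, w i
    · obtain ⟨B, hBT, hB⟩ := ih hT'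
      exact ⟨B, hBT.trans (subset_insert x T), hB⟩
    · refine ⟨insert x T, Subset.rfl, hT, ?_⟩
      rw [sum_insert hx]
      linarith [hw x]

theorem exists_nat_inv_le_mul_le {ε : ℝ} (hε : 0 < ε) (hε1 : ε < 1 / 4) :
    ∃ k : ℕ, 0 < k ∧ 1 ≤ 4 * ε * k ∧ k * (ε + ε ^ 3) ≤ 1 := by
  have hk := Nat.ceil_lt_add_one (by positivity : 0 ≤ 1 / (4 * ε))
  have hk' := Nat.le_ceil (1 / (4 * ε))
  refine ⟨⌈1 / (4 * ε)⌉₊, Nat.ceil_pos.2 (by positivity), ?_, ?_⟩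
  · rwa [div_le_iff₀' (by positivity)] at hk'
  · have hkε : (⌈1 / (4 * ε)⌉₊ : ℝ) * ε < 1 / 2 := by
      calc (⌈1 / (4 * ε)⌉₊ : ℝ) * ε < (1 / (4 * ε) + 1) * ε := by gcongr
        _ = 1 / 4 + ε := by field_simp
        _ < 1 / 2 := by linarith
    nlinarith [sq_nonneg ε]

section

variable {U : Type*} [DecidableEq U] {f : Finset U → ℝ}

theorem IsSubmodular.sub_sdiff_le_sub_sdiff (hf : IsSubmodular f) (S : Finset U) {C T : Finset U}
    (hCT : C ⊆ T) : f S - f (S \ C) ≤ f (S \ (T \ C)) - f (S \ T) := by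
  have hunion : (S \ C) ∪ (S \ (T \ C)) = S := by
    ext x; simp only [mem_union, mem_sdiff]; tauto
  have hinter : (S \ C) ∩ (S \ (T \ C)) = S \ T := by
    ext x; simp only [mem_inter, mem_sdiff]; have := @hCT x; tauto
  have := hf (S \ C) (S \ (T \ C))
  rw [hunion, hinter] at this
  linarith

theorem IsSubmodular.exists_subset_mul_loss_le (hf : IsSubmodular f) (S : Finset U)
    (w : U → ℝ) {a δ : ℝ} (ha : 0 ≤ a) (hδ : 0 ≤ δ) (hw : ∀ i, w i ≤ δ) (n : ℕ) {T : Finset U}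
    (hT : (n + 1) * (a + δ) ≤ ∑ i ∈ T, w i) :
    ∃ B ⊆ T, a ≤ ∑ i ∈ B, w i ∧ (n + 1) * (f S - f (S \ B)) ≤ f S - f (S \ T) := by
  induction n generalizing T with
  | zero => exact ⟨T, Subset.rfl, by push_cast at hT; linarith, by push_cast; linarith⟩
  | succ n ih =>
    -- Split off a chunk `C`: its loss is at most `f (S \ (T \ C)) - f (S \ T)`, which telescopes
    -- with the bound for `T \ C`; keep the cheaper of `C` and the chunk found in `T \ C`.
    obtain ⟨C, hCT, hCa, hCδ⟩ := exists_subset_sum_mem_Icc w ha hδ hw (T := T) (by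
      push_cast at hT; nlinarith [(by positivity : (0 : ℝ) ≤ n * (a + δ))])
    have hT' : (n + 1) * (a + δ) ≤ ∑ i ∈ T \ C, w i := by
      rw [sum_sdiff_eq_sub hCT]; push_cast at hT; linarith
    obtain ⟨B, hBT, hBa, hBloss⟩ := ih hT'
    have hCloss := hf.sub_sdiff_le_sub_sdiff S hCT
    push_cast
    by_cases hcmp : f S - f (S \ C) ≤ f S - f (S \ B)
    · exact ⟨C, hCT, hCa, by nlinarith⟩
    · exact ⟨B, hBT.trans sdiff_subset, hBa, by nlinarith⟩

theorem IsSubmodular.exists_subset_sum_le_of_small (hf : IsSubmodular f) (hf0 : ∀ T, 0 ≤ f T)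
    (w : U → ℝ) {L ε : ℝ} (hL : 0 ≤ L) (hε : 0 < ε) (hε1 : ε < 1 / 4)
    (hsmall : ∀ i, w i ≤ ε ^ 3 * L) {S : Finset U} (hS : ∑ i ∈ S, w i ≤ (1 + ε) * L) :
    ∃ S' ⊆ S, ∑ i ∈ S', w i ≤ L ∧ (1 - 4 * ε) * f S ≤ f S' := by
  by_cases hSL : ∑ i ∈ S, w i ≤ L
  · exact ⟨S, Subset.rfl, hSL, by nlinarith [hf0 S]⟩
  rw [not_le] at hSL
  obtain ⟨k, hk0, hk4, hkε⟩ := exists_nat_inv_le_mul_le hε hε1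
  obtain ⟨n, rfl⟩ := Nat.exists_eq_succ_of_ne_zero hk0.ne'
  push_cast at hk4 hkε
  have hheavy : (n + 1) * ((∑ i ∈ S, w i - L) + ε ^ 3 * L) ≤ ∑ i ∈ S, w i := by
    nlinarith [mul_le_mul_of_nonneg_right hkε hL]
  obtain ⟨B, hBS, hBa, hBloss⟩ :=
    hf.exists_subset_mul_loss_le S w (by linarith) (by positivity) hsmall n hheavy
  rw [sdiff_self, bot_eq_empty] at hBloss
  refine ⟨S \ B, sdiff_subset, by rw [sum_sdiff_eq_sub hBS]; linarith, ?_⟩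
  have hloss : (n + 1) * (f S - f (S \ B)) ≤ f S := by linarith [hf0 ∅]
  rcases le_or_gt (f S - f (S \ B)) 0 with hneg | hpos
  · nlinarith [hf0 S]
  · nlinarith [mul_le_mul_of_nonneg_right hk4 hpos.le, mul_le_mul_of_nonneg_left hloss hε.le]

theorem IsSubmodular.exists_subset_forall_sum_le_of_small {ι : Type*} [DecidableEq ι]
    (hf : IsSubmodular f) (hf0 : ∀ T, 0 ≤ f T) (c : U → ι → ℝ) (hc : ∀ i r, 0 ≤ c i r)
    {L : ι → ℝ} (hL : ∀ r, 0 ≤ L r) {ε : ℝ} (hε : 0 < ε) (hε1 : ε < 1 / 4)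
    (hsmall : ∀ i r, c i r ≤ ε ^ 3 * L r) {S : Finset U} (R : Finset ι)
    (hS : ∀ r ∈ R, ∑ i ∈ S, c i r ≤ (1 + ε) * L r) :
    ∃ S' ⊆ S, (∀ r ∈ R, ∑ i ∈ S', c i r ≤ L r) ∧ (1 - 4 * ε) ^ #R * f S ≤ f S' := by
  have hmono {r : ι} {A B : Finset U} (hAB : A ⊆ B) : ∑ i ∈ A, c i r ≤ ∑ i ∈ B, c i r :=
    sum_le_sum_of_subset_of_nonneg hAB fun i _ _ ↦ hc i r
  induction R using Finset.induction_on with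
  | empty => exact ⟨S, Subset.rfl, by simp, by simp⟩
  | insert r R hr ih =>
    obtain ⟨S₁, hS₁S, hS₁R, hS₁f⟩ := ih fun r' hr' ↦ hS r' (mem_insert_of_mem hr')
    obtain ⟨S', hS'S₁, hS'r, hS'f⟩ := hf.exists_subset_sum_le_of_small hf0 (c · r) (hL r) hε
      hε1 (hsmall · r) ((hmono hS₁S).trans (hS r (mem_insert_self r R)))
    refine ⟨S', hS'S₁.trans hS₁S, ?_, ?_⟩
    · simp only [mem_insert, forall_eq_or_imp]
      exact ⟨hS'r, fun r' hr' ↦ (hmono hS'S₁).trans (hS₁R r' hr')⟩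
    · rw [card_insert_of_notMem hr, pow_succ', mul_assoc]
      exact (mul_le_mul_of_nonneg_left hS₁f (by linarith)).trans hS'f

end

theorem nearly_feasible_fix_small_elements_general
    {U : Type*} [DecidableEq U]
    (d : ℕ)
    (f : Finset U → ℝ)
    (hsub : ∀ S T : Finset U, f (S ∪ T) + f (S ∩ T) ≤ f S + f T)
    (hnonneg : ∀ S : Finset U, 0 ≤ f S)
    (c : U → Fin d → ℝ) (hc : ∀ i r, 0 ≤ c i r)
    (L : Fin d → ℝ) (hL : ∀ r, 0 < L r)
    (ε : ℝ) (hε : 0 < ε) (hε1 : ε < 1 / 4)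
    (hsmall : ∀ (i : U) (r : Fin d), c i r ≤ ε ^ 3 * L r)
    (S : Finset U)
    (hnf : ∀ r, ∑ i ∈ S, c i r ≤ (1 + ε) * L r) :
    ∃ S' ⊆ S, (∀ r, ∑ i ∈ S', c i r ≤ L r) ∧
      (1 - 4 * ε) ^ d * f S ≤ f S' := by
  obtain ⟨S', hS'S, hS'feas, hS'f⟩ := IsSubmodular.exists_subset_forall_sum_le_of_small
    hsub hnonneg c hc (fun r ↦ (hL r).le) hε hε1 hsmall univ fun r _ ↦ hnf r
  rw [card_univ, Fintype.card_fin] at hS'f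
  exact ⟨S', hS'S, fun r ↦ hS'feas r (mem_univ r), hS'f⟩

theorem nearly_feasible_fix_small_elements
    {U : Type*} [Fintype U] [DecidableEq U]
    (d : ℕ) (hd : 1 ≤ d)
    (f : Finset U → ℝ)
    (hsub : ∀ S T : Finset U, f (S ∪ T) + f (S ∩ T) ≤ f S + f T)
    (hnonneg : ∀ S : Finset U, 0 ≤ f S)
    (c : U → Fin d → ℝ) (hc : ∀ i r, 0 ≤ c i r)
    (L : Fin d → ℝ) (hL : ∀ r, 0 < L r)
    (ε : ℝ) (hε : 0 < ε) (hε1 : ε < 1 / 4)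
    (hsmall : ∀ (i : U) (r : Fin d), c i r ≤ ε ^ 3 * L r)
    (S : Finset U)
    (hnf : ∀ r, ∑ i ∈ S, c i r ≤ (1 + ε) * L r) :
    ∃ S' ⊆ S, (∀ r, ∑ i ∈ S', c i r ≤ L r) ∧
      (1 - 4 * ε) ^ d * f S ≤ f S' :=
  nearly_feasible_fix_small_elements_general d f hsub hnonneg c hc L hL ε hε hε1 hsmall S hnf
end

section
/- Let U be a finite type and let f : Finset U → ℝ be a nonnegative submodular set function with f(∅) ≥ 0. Let O ⊆ U be a finite set, let h ≥ 1 with h ≤ |O|, and let T = {i_1, …, i_h} ⊆ O be chosen greedily by residual profit: writing K_ℓ = {i_1, …, i_ℓ} (K_0 = ∅), for each ℓ the element i_ℓ maximizes f(K_{ℓ−1} ∪ {i}) − f(K_{ℓ−1}) over i ∈ O \ K_{ℓ−1}, and T = K_h. Then for every R ⊆ O \ T, f(O \ R) ≥ f(O) − (|R|/h)·f(T). -/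
/-!
Submodularity makes the marginal gain of an element shrink as the base set grows. Every
`r ∈ R` lies outside the greedy prefixes `K_ℓ ⊆ O \ R`, so its gain on `O \ R` is at most its
gain on each `K_ℓ`, hence at most the greedy step `f K_{ℓ+1} - f K_ℓ`. Averaging over the `h`
steps, which telescope to `f T - f ∅ ≤ f T`, bounds that gain by `f T / h`; adding the elements
of `R` back to `O \ R` one at a time then costs at most `|R| · f T / h`.
-/

/-- The set of the first `ℓ` elements of the greedy sequence `a`. -/
def prefixSet {U : Type*} [DecidableEq U] {h : ℕ} (a : Fin h → U) (ℓ : ℕ) :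
    Finset U :=
  (Finset.univ.filter fun j : Fin h => (j : ℕ) < ℓ).image a

open Finset

section Submodular

variable {U : Type*} [DecidableEq U] (f : Finset U → ℝ)

theorem marginal_gain_antitone
    (hsub : ∀ S T : Finset U, f (S ∪ T) + f (S ∩ T) ≤ f S + f T)
    {A B : Finset U} (hAB : A ⊆ B) {x : U} (hx : x ∉ B) :
    f (insert x B) - f B ≤ f (insert x A) - f A := by
  have hunion : insert x A ∪ B = insert x B := by
    rw [insert_union, union_eq_right.mpr hAB]
  have hinter : insert x A ∩ B = A := by
    rw [insert_inter_of_notMem hx, inter_eq_left.mpr hAB]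
  have := hsub (insert x A) B
  rw [hunion, hinter] at this
  linarith

theorem le_add_sum_marginal_gain
    (hsub : ∀ S T : Finset U, f (S ∪ T) + f (S ∩ T) ≤ f S + f T)
    (B R : Finset U) (hRB : Disjoint R B) :
    f (B ∪ R) ≤ f B + ∑ r ∈ R, (f (insert r B) - f B) := by
  induction R using Finset.induction_on with
  | empty => simp
  | @insert x R hxR ih =>
    obtain ⟨hxB, hRB⟩ := disjoint_insert_left.mp hRB
    have hdim : f (insert x (B ∪ R)) - f (B ∪ R) ≤ f (insert x B) - f B :=
      marginal_gain_antitone f hsub subset_union_left (by simp [hxB, hxR])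
    rw [union_insert, sum_insert hxR]
    linarith [ih hRB]

end Submodular

section PrefixSet

variable {U : Type*} [DecidableEq U] {h : ℕ} (a : Fin h → U)

theorem prefixSet_zero : prefixSet a 0 = ∅ := by
  simp [prefixSet]

theorem prefixSet_mono {ℓ m : ℕ} (hℓm : ℓ ≤ m) : prefixSet a ℓ ⊆ prefixSet a m :=
  image_subset_image fun j hj => by
    simp only [mem_filter, mem_univ, true_and] at hj ⊢
    omega

theorem prefixSet_succ (ℓ : Fin h) :
    prefixSet a ((ℓ : ℕ) + 1) = insert (a ℓ) (prefixSet a ℓ) := by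
  ext x
  simp only [prefixSet, mem_image, mem_filter, mem_univ, true_and, mem_insert]
  constructor
  · rintro ⟨j, hj, rfl⟩
    rcases Nat.lt_succ_iff_lt_or_eq.mp hj with hlt | heq
    · exact Or.inr ⟨j, hlt, rfl⟩
    · exact Or.inl (congrArg a (Fin.ext heq))
  · rintro (rfl | ⟨j, hj, rfl⟩)
    · exact ⟨ℓ, Nat.lt_succ_self _, rfl⟩
    · exact ⟨j, Nat.lt_succ_of_lt hj, rfl⟩

theorem prefixSet_subset {O : Finset U} (haO : ∀ ℓ, a ℓ ∈ O) (ℓ : ℕ) :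
    prefixSet a ℓ ⊆ O := by
  intro x hx
  obtain ⟨j, -, rfl⟩ := mem_image.mp hx
  exact haO j

end PrefixSet

section Greedy

variable {U : Type*} [DecidableEq U] (f : Finset U → ℝ)
  (hsub : ∀ S T : Finset U, f (S ∪ T) + f (S ∩ T) ≤ f S + f T)
  {O : Finset U} {h : ℕ} {a : Fin h → U}
  (hgreedy : ∀ ℓ : Fin h, ∀ i ∈ O \ prefixSet a ℓ,
    f (insert i (prefixSet a ℓ)) - f (prefixSet a ℓ) ≤
      f (insert (a ℓ) (prefixSet a ℓ)) - f (prefixSet a ℓ))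
  {B : Finset U} {r : U}

include hsub hgreedy in
theorem marginal_gain_le_greedy_step (hTB : prefixSet a h ⊆ B) (hrO : r ∈ O) (hrB : r ∉ B)
    (ℓ : Fin h) :
    f (insert r B) - f B ≤ f (prefixSet a ((ℓ : ℕ) + 1)) - f (prefixSet a ℓ) := by
  have hKT : prefixSet a ℓ ⊆ prefixSet a h := prefixSet_mono a ℓ.isLt.le
  have hdim := marginal_gain_antitone f hsub (hKT.trans hTB) hrB
  have hgain := hgreedy ℓ r (mem_sdiff.mpr ⟨hrO, fun hrK => hrB (hTB (hKT hrK))⟩)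
  rw [prefixSet_succ]
  linarith

include hsub hgreedy in
theorem mul_marginal_gain_le_greedy_value (hTB : prefixSet a h ⊆ B) (hrO : r ∈ O)
    (hrB : r ∉ B) :
    h * (f (insert r B) - f B) ≤ f (prefixSet a h) - f ∅ :=
  calc h * (f (insert r B) - f B)
      = ∑ _ℓ ∈ range h, (f (insert r B) - f B) := by rw [sum_const, card_range, nsmul_eq_mul]
    _ ≤ ∑ ℓ ∈ range h, (f (prefixSet a (ℓ + 1)) - f (prefixSet a ℓ)) :=
        sum_le_sum fun ℓ hℓ =>
          marginal_gain_le_greedy_step f hsub hgreedy hTB hrO hrB ⟨ℓ, mem_range.mp hℓ⟩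
    _ = f (prefixSet a h) - f ∅ := by
        rw [sum_range_sub (fun ℓ => f (prefixSet a ℓ)), prefixSet_zero]

end Greedy

theorem greedy_removal_loss_bound_general
    {U : Type*} [DecidableEq U] (f : Finset U → ℝ)
    (hsub : ∀ S T : Finset U, f (S ∪ T) + f (S ∩ T) ≤ f S + f T)
    (hempty : 0 ≤ f ∅)
    (O : Finset U) (h : ℕ) (hh : 1 ≤ h)
    (a : Fin h → U)
    (haO : ∀ ℓ : Fin h, a ℓ ∈ O \ prefixSet a ℓ)
    (hgreedy : ∀ ℓ : Fin h, ∀ i ∈ O \ prefixSet a ℓ,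
      f (insert i (prefixSet a ℓ)) - f (prefixSet a ℓ) ≤
        f (insert (a ℓ) (prefixSet a ℓ)) - f (prefixSet a ℓ)) :
    ∀ R ⊆ O \ prefixSet a h,
      f O - ((R.card : ℝ) / h) * f (prefixSet a h) ≤ f (O \ R) := by
  intro R hR
  set T := prefixSet a h
  have hRO : R ⊆ O := hR.trans sdiff_subset
  have hTOR : T ⊆ O \ R := fun x hxT => mem_sdiff.mpr
    ⟨prefixSet_subset a (fun ℓ => (mem_sdiff.mp (haO ℓ)).1) h hxT,
      fun hxR => (mem_sdiff.mp (hR hxR)).2 hxT⟩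
  have hh0 : (0 : ℝ) < h := by exact_mod_cast hh
  have hgain : ∀ r ∈ R, f (insert r (O \ R)) - f (O \ R) ≤ f T / h := fun r hr => by
    rw [le_div_iff₀ hh0, mul_comm]
    linarith [mul_marginal_gain_le_greedy_value f hsub hgreedy hTOR (hRO hr)
      (fun hrOR => (mem_sdiff.mp hrOR).2 hr)]
  calc f O - (R.card / h) * f T
      = f ((O \ R) ∪ R) - ∑ _r ∈ R, f T / h := by
        rw [sdiff_union_of_subset hRO, sum_const, nsmul_eq_mul, mul_div_assoc']
        ring
    _ ≤ f (O \ R) := by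
        linarith [le_add_sum_marginal_gain f hsub (O \ R) R sdiff_disjoint.symm, sum_le_sum hgain]

theorem greedy_removal_loss_bound
    {U : Type*} [Fintype U] [DecidableEq U] (f : Finset U → ℝ)
    (hsub : ∀ S T : Finset U, f (S ∪ T) + f (S ∩ T) ≤ f S + f T)
    (hnonneg : ∀ S : Finset U, 0 ≤ f S)
    (hempty : 0 ≤ f ∅)
    (O : Finset U) (h : ℕ) (hh : 1 ≤ h) (hhO : h ≤ O.card)
    (a : Fin h → U) (ha : Function.Injective a)
    (haO : ∀ ℓ : Fin h, a ℓ ∈ O \ prefixSet a ℓ)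
    (hgreedy : ∀ ℓ : Fin h, ∀ i ∈ O \ prefixSet a ℓ,
      f (insert i (prefixSet a ℓ)) - f (prefixSet a ℓ) ≤
        f (insert (a ℓ) (prefixSet a ℓ)) - f (prefixSet a ℓ)) :
    ∀ R ⊆ O \ prefixSet a h,
      f O - ((R.card : ℝ) / h) * f (prefixSet a h) ≤ f (O \ R) :=
  greedy_removal_loss_bound_general f hsub hempty O h hh a haO hgreedy
end

section
/- Let U be a finite type, let f : Finset U → ℝ be a submodular set function, and let F : [0,1]^U → ℝ be its extension by expectation. For any x ∈ [0,1]^U and any two distinct elements i, j ∈ U, the one-variable function δ ↦ F(x + δ·e_i − δ·e_j), defined on the interval of δ for which x + δ·e_i − δ·e_j ∈ [0,1]^U, is convex (where e_i, e_j are the standard unit vectors). -/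
/-!
Write `F = mulExt f`. Splitting the sum over `R` according to whether `a ∈ R` shows that `F` is
affine in each coordinate `y a`, with slope `F (y[a := 1]) - F (y[a := 0]) = mulExt (∂ₐ f) y`
for the discrete derivative `∂ₐ f R = f (R ∪ {a}) - f (R \ {a})`. Hence along the line
`x + δ (eᵢ - eⱼ)` the function `F` is a quadratic polynomial in `δ` with leading coefficient
`-mulExt (∂ⱼ ∂ᵢ f) x`. Submodularity says exactly that `∂ⱼ ∂ᵢ f ≤ 0` for `i ≠ j`, and the
weights of `mulExt` are nonnegative on the unit cube, so this coefficient is nonnegative.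
-/

/-- The extension by expectation (multilinear extension) of a set function,
viewed as a function on all of `ℝ^U` via the same multilinear formula. -/
noncomputable def mulExt {U : Type*} [Fintype U] [DecidableEq U]
    (f : Finset U → ℝ) (y : U → ℝ) : ℝ :=
  ∑ R : Finset U, f R * ((∏ i ∈ R, y i) * ∏ i ∈ Rᶜ, (1 - y i))

open Finset Function

section

variable {U : Type*} [DecidableEq U]

def discreteDeriv (a : U) (f : Finset U → ℝ) (R : Finset U) : ℝ :=
  f (insert a R) - f (R.erase a)

lemma discreteDeriv_insert (a : U) (f : Finset U → ℝ) (R : Finset U) :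
    discreteDeriv a f (insert a R) = discreteDeriv a f R := by
  simp [discreteDeriv]

lemma discreteDeriv_of_notMem {a : U} {R : Finset U} (f : Finset U → ℝ) (ha : a ∉ R) :
    discreteDeriv a f R = f (insert a R) - f R := by
  rw [discreteDeriv, erase_eq_of_notMem ha]

lemma discreteDeriv_discreteDeriv_nonpos {f : Finset U → ℝ}
    (hsub : ∀ S T : Finset U, f (S ∪ T) + f (S ∩ T) ≤ f S + f T)
    {i j : U} (hij : i ≠ j) (R : Finset U) :
    discreteDeriv j (discreteDeriv i f) R ≤ 0 := by
  have hunion : (insert j R).erase i ∪ insert i (R.erase j) = insert i (insert j R) := by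
    ext k; by_cases hk : k = i <;> simp [hk]; tauto
  have hinter : (insert j R).erase i ∩ insert i (R.erase j) = (R.erase j).erase i := by
    ext k; by_cases hk : k = i <;> simp [hk, hij]
  have hsq := hsub ((insert j R).erase i) (insert i (R.erase j))
  rw [hunion, hinter] at hsq
  simp only [discreteDeriv]
  linarith

def swapLine (x : U → ℝ) (i j : U) (δ : ℝ) : U → ℝ :=
  fun k => x k + (if k = i then δ else 0) - (if k = j then δ else 0)

lemma swapLine_eq_update (x : U → ℝ) {i j : U} (hij : i ≠ j) (δ : ℝ) :
    swapLine x i j δ = update (update x i (x i + δ)) j (x j - δ) := by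
  funext k
  by_cases hki : k = i <;> by_cases hkj : k = j <;> simp_all [swapLine]

lemma convex_setOf_swapLine_mem_Icc (x : U → ℝ) (i j : U) :
    Convex ℝ {δ : ℝ | ∀ k, swapLine x i j δ k ∈ Set.Icc (0 : ℝ) 1} := by
  have hpre : {δ : ℝ | ∀ k, swapLine x i j δ k ∈ Set.Icc (0 : ℝ) 1} =
      AffineMap.lineMap (k := ℝ) x (swapLine x i j 1) ⁻¹' Set.univ.pi fun _ => Set.Icc 0 1 := by
    ext δ
    simp only [Set.mem_ofPred_eq, Set.mem_preimage, Set.mem_univ_pi,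
      AffineMap.lineMap_apply_module]
    refine forall_congr' fun k => ?_
    simp only [swapLine, Pi.add_apply, Pi.smul_apply, smul_eq_mul]
    split_ifs <;> ring_nf
  rw [hpre]
  exact (convex_pi fun _ _ => convex_Icc 0 1).affine_preimage _

end

section

variable {U : Type*} [Fintype U] [DecidableEq U]

lemma mulExt_eq_sum_powerset_erase (f : Finset U → ℝ) (y : U → ℝ) (a : U) :
    mulExt f y = ∑ R ∈ (univ.erase a).powerset,
      ((1 - y a) * f R + y a * f (insert a R)) *
        ((∏ k ∈ R, y k) * ∏ k ∈ Rᶜ.erase a, (1 - y k)) := by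
  have huniv : (univ : Finset (Finset U)) = (insert a (univ.erase a)).powerset := by
    rw [insert_erase (mem_univ a), powerset_univ]
  rw [mulExt, huniv, sum_powerset_insert (notMem_erase a univ), ← sum_add_distrib]
  refine sum_congr rfl fun R hR => ?_
  have ha : a ∉ R := fun h => notMem_erase a univ (mem_powerset.1 hR h)
  rw [prod_insert ha, compl_insert, ← mul_prod_erase Rᶜ (fun k => 1 - y k) (mem_compl.2 ha)]
  ring

lemma prod_update_eq_of_notMem {a : U} {R : Finset U} (y : U → ℝ) (t : ℝ) (ha : a ∉ R) :
    (∏ k ∈ R, update y a t k) * ∏ k ∈ Rᶜ.erase a, (1 - update y a t k) =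
      (∏ k ∈ R, y k) * ∏ k ∈ Rᶜ.erase a, (1 - y k) := by
  congr 1
  · exact prod_congr rfl fun k hk => update_of_ne (ne_of_mem_of_not_mem hk ha) _ _
  · exact prod_congr rfl fun k hk => by rw [update_of_ne (ne_of_mem_erase hk)]

lemma mulExt_update (f : Finset U → ℝ) (y : U → ℝ) (a : U) (t : ℝ) :
    mulExt f (update y a t) =
      (1 - t) * mulExt f (update y a 0) + t * mulExt f (update y a 1) := by
  simp only [mulExt_eq_sum_powerset_erase _ _ a, update_self, mul_sum, ← sum_add_distrib]
  refine sum_congr rfl fun R hR => ?_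
  have ha : a ∉ R := fun h => notMem_erase a univ (mem_powerset.1 hR h)
  simp only [prod_update_eq_of_notMem y _ ha]
  ring

lemma mulExt_discreteDeriv (f : Finset U → ℝ) (y : U → ℝ) (a : U) :
    mulExt (discreteDeriv a f) y = mulExt f (update y a 1) - mulExt f (update y a 0) := by
  simp only [mulExt_eq_sum_powerset_erase _ _ a, update_self, ← sum_sub_distrib]
  refine sum_congr rfl fun R hR => ?_
  have ha : a ∉ R := fun h => notMem_erase a univ (mem_powerset.1 hR h)
  simp only [prod_update_eq_of_notMem y _ ha, discreteDeriv_insert,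
    discreteDeriv_of_notMem f ha]
  ring

lemma mulExt_nonpos {g : Finset U → ℝ} (hg : ∀ R, g R ≤ 0) {y : U → ℝ}
    (hy : ∀ k, y k ∈ Set.Icc (0 : ℝ) 1) : mulExt g y ≤ 0 :=
  sum_nonpos fun R _ => mul_nonpos_of_nonpos_of_nonneg (hg R) <|
    mul_nonneg (prod_nonneg fun k _ => (hy k).1) (prod_nonneg fun k _ => sub_nonneg.2 (hy k).2)

lemma mulExt_update_update (f : Finset U → ℝ) (y : U → ℝ) {i j : U} (hij : i ≠ j) (s t : ℝ) :
    mulExt f (update (update y i s) j t) =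
      (1 - s) * (1 - t) * mulExt f (update (update y i 0) j 0)
      + s * (1 - t) * mulExt f (update (update y i 1) j 0)
      + (1 - s) * t * mulExt f (update (update y i 0) j 1)
      + s * t * mulExt f (update (update y i 1) j 1) := by
  rw [mulExt_update f _ j t]
  simp only [update_comm hij _ _ y, mulExt_update f (update y j _) i s]
  ring

lemma mulExt_add_swap (f : Finset U → ℝ) (y : U → ℝ) {i j : U} (hij : i ≠ j) (δ : ℝ) :
    mulExt f (update (update y i (y i + δ)) j (y j - δ)) =
      mulExt f y + δ * (mulExt (discreteDeriv i f) y - mulExt (discreteDeriv j f) y)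
        - δ ^ 2 * mulExt (discreteDeriv j (discreteDeriv i f)) y := by
  set G : ℝ → ℝ → ℝ := fun s t => mulExt f (update (update y i s) j t)
  have hG : ∀ s t, G s t = (1 - s) * (1 - t) * G 0 0 + s * (1 - t) * G 1 0
      + (1 - s) * t * G 0 1 + s * t * G 1 1 := mulExt_update_update f y hij
  have h0 : mulExt f y = G (y i) (y j) := by simp [G]
  have hi : ∀ c, mulExt f (update y i c) = G c (y j) := fun c => by
    show _ = mulExt f (update (update y i c) j (y j))
    rw [update_eq_self_iff (f := update y i c) (a := j) |>.2 (update_of_ne hij.symm c y).symm]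
  have hj : ∀ c, mulExt f (update y j c) = G (y i) c := fun c => by simp [G]
  have hji : ∀ a b, mulExt f (update (update y j b) i a) = G a b := fun a b => by
    simp [G, update_comm hij]
  simp only [mulExt_discreteDeriv, h0, hi, hj, hji]
  show G _ _ = _
  rw [hG (y i + δ), hG (y i) (y j), hG 1 (y j), hG 0 (y j), hG (y i) 1, hG (y i) 0]
  ring

end

lemma convexOn_quadratic {s : Set ℝ} (hs : Convex ℝ s) (a b : ℝ) {c : ℝ} (hc : 0 ≤ c) :
    ConvexOn ℝ s (fun δ => a + b * δ + c * δ ^ 2) := by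
  refine ⟨hs, fun u _ v _ p q hp hq hpq => ?_⟩
  obtain rfl : q = 1 - p := by linarith
  simp only [smul_eq_mul]
  nlinarith [mul_nonneg (mul_nonneg hc (mul_nonneg hp hq)) (sq_nonneg (u - v))]

theorem mulExt_convex_along_swap_direction
    {U : Type*} [Fintype U] [DecidableEq U] (f : Finset U → ℝ)
    (hsub : ∀ S T : Finset U, f (S ∪ T) + f (S ∩ T) ≤ f S + f T)
    (x : U → ℝ) (hx : ∀ k, x k ∈ Set.Icc (0 : ℝ) 1)
    (i j : U) (hij : i ≠ j) :
    ConvexOn ℝ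
      {δ : ℝ | ∀ k : U,
        x k + (if k = i then δ else 0) - (if k = j then δ else 0) ∈
          Set.Icc (0 : ℝ) 1}
      (fun δ => mulExt f
        (fun k => x k + (if k = i then δ else 0) - (if k = j then δ else 0))) := by
  have hcross := mulExt_nonpos (discreteDeriv_discreteDeriv_nonpos hsub hij) hx
  refine (convexOn_quadratic (convex_setOf_swapLine_mem_Icc x i j) (mulExt f x)
    (mulExt (discreteDeriv i f) x - mulExt (discreteDeriv j f) x) (neg_nonneg.2 hcross)).congr
      fun δ _ => ?_
  show _ = mulExt f (swapLine x i j δ)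
  rw [swapLine_eq_update x hij, mulExt_add_swap f x hij]
  ring
end
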